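/- arXiv:2103.02307 — 2 statements merged into one kernel-verified Lean document; each statement's English description precedes it below -/
import Mathlib

section
/- If G is a connected graph with at least 5 vertices, then W(G) > ε(G). -/
/-!
On a shortest walk from `v` to a vertex farthest from it, the distances to `v` run through
`0, 1, …, e`, where `e` is the eccentricity of `v`; every other vertex is at distance at least `1`.
Hence the distances from `v` sum to at least `e(e+1)/2 + (n - e - 1)`, which is at least `2e + 1`
once `n ≥ 5`. Summing over `v` gives `2 W(G) ≥ 2 ε(G) + n > 2 ε(G)`.
-/

open Finset

/-- The Wiener index: sum of distances over unordered pairs of vertices. -/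
noncomputable def wiener {V : Type*} [Fintype V] (G : SimpleGraph V) : ℕ :=
  (∑ u : V, ∑ v : V, G.dist u v) / 2

/-- The eccentricity of a vertex. -/
noncomputable def eccVert {V : Type*} [Fintype V] (G : SimpleGraph V) (v : V) : ℕ :=
  univ.sup (G.dist v)

/-- The eccentricity (total eccentricity) of a graph. -/
noncomputable def eccSum {V : Type*} [Fintype V] (G : SimpleGraph V) : ℕ :=
  ∑ v : V, eccVert G v

namespace SimpleGraph

variable {V : Type*} {G : SimpleGraph V}

lemma Connected.dist_getVert_of_length_eq_dist (hG : G.Connected) {v u : V} {p : G.Walk v u}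
    (hp : p.length = G.dist v u) {j : ℕ} (hj : j ≤ p.length) : G.dist v (p.getVert j) = j := by
  have h_take := G.dist_le (p.take j)
  have h_drop := G.dist_le (p.drop j)
  have h_tri := hG.dist_triangle (u := v) (v := p.getVert j) (w := u)
  rw [Walk.take_length] at h_take
  rw [Walk.drop_length] at h_drop
  omega

variable [Fintype V]

lemma Connected.exists_walk_length_eq_eccVert (hG : G.Connected) (v : V) :
    ∃ u, ∃ p : G.Walk v u, p.length = G.dist v u ∧ p.length = eccVert G v := by
  obtain ⟨u, -, hu⟩ := exists_mem_eq_sup univ ⟨v, mem_univ v⟩ (G.dist v)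
  obtain ⟨p, hp⟩ := (hG v u).exists_walk_length_eq_dist
  exact ⟨u, p, hp, by rw [hp, eccVert, hu]⟩

lemma Connected.sum_range_add_card_sub_le_sum_dist (hG : G.Connected) (v : V) :
    (∑ j ∈ range (eccVert G v + 1), j) + (Fintype.card V - (eccVert G v + 1)) ≤
      ∑ u, G.dist v u := by
  classical
  obtain ⟨u, p, hp, he⟩ := hG.exists_walk_length_eq_eccVert v
  have h_dist : ∀ j ∈ range (eccVert G v + 1), G.dist v (p.getVert j) = j := fun j hj =>
    hG.dist_getVert_of_length_eq_dist hp (by rw [mem_range] at hj; omega)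
  have h_inj : Set.InjOn p.getVert (range (eccVert G v + 1)) := fun i hi j hj hij => by
    rw [← h_dist i hi, ← h_dist j hj, hij]
  set T := (range (eccVert G v + 1)).image p.getVert
  have h_sum_T : ∑ w ∈ T, G.dist v w = ∑ j ∈ range (eccVert G v + 1), j :=
    (sum_image h_inj).trans (sum_congr rfl h_dist)
  have h_card_T : #T = eccVert G v + 1 := by rw [card_image_of_injOn h_inj, card_range]
  have h_rest : #(univ \ T) ≤ ∑ w ∈ univ \ T, G.dist v w := by
    have hv : v ∈ T := mem_image.2 ⟨0, by simp, p.getVert_zero⟩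
    simpa using card_nsmul_le_sum (univ \ T) (G.dist v) 1 fun w hw =>
      hG.pos_dist_of_ne fun hvw => (mem_sdiff.1 hw).2 (hvw ▸ hv)
  rw [card_sdiff_of_subset (subset_univ T), h_card_T, card_univ] at h_rest
  rw [← sum_sdiff (subset_univ T), h_sum_T]
  omega

end SimpleGraph

lemma two_mul_add_one_le_sum_range_add_sub {n : ℕ} (hn : 5 ≤ n) (e : ℕ) :
    2 * e + 1 ≤ (∑ j ∈ range (e + 1), j) + (n - (e + 1)) := by
  have h_gauss := sum_range_id_mul_two (e + 1)
  rcases le_or_gt e 3 with he | he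
  · interval_cases e <;> omega
  · simp only [Nat.add_sub_cancel] at h_gauss
    nlinarith

theorem stmt_3 {V : Type*} [Fintype V] (G : SimpleGraph V)
    (hG : G.Connected) (hn : 5 ≤ Fintype.card V) :
    eccSum G < wiener G := by
  have h_row (v : V) : 2 * eccVert G v + 1 ≤ ∑ u, G.dist v u :=
    (two_mul_add_one_le_sum_range_add_sub hn _).trans (hG.sum_range_add_card_sub_le_sum_dist v)
  have h_total : 2 * eccSum G + Fintype.card V ≤ ∑ v, ∑ u, G.dist v u := by
    have := sum_le_sum fun v (_ : v ∈ univ) => h_row v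
    rwa [sum_add_distrib, ← mul_sum, sum_const, card_univ, smul_eq_mul, mul_one] at this
  rw [wiener]
  omega
end

section
/- For every connected graph G with n vertices and m edges, 2·W(G) ≤ (n−1)·ε(G) − ξ^c(G) + 2m, with equality if and only if the diameter of G is at most 2. -/
open Finset

/-- The eccentric connectivity of a graph. -/
noncomputable def eccConn {V : Type*} [Fintype V] (G : SimpleGraph V)
    [DecidableRel G.Adj] : ℕ :=
  ∑ v : V, G.degree v * eccVert G v

/-- The diameter of a graph: the maximum eccentricity. -/
noncomputable def graphDiam {V : Type*} [Fintype V] (G : SimpleGraph V) : ℕ :=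
  univ.sup (eccVert G)

/-!
Split the distances from a vertex `u` according to whether the other end is a neighbour
(distance `1`) or a non-neighbour (distance at most `ecc u`). Summing over `u`, the neighbours
contribute `2m` and the non-neighbours at most `Σ (n - 1 - deg u) ecc u = (n - 1) ε - ξᶜ`. Equality
forces every non-neighbour of every `u` to lie at distance exactly `ecc u`; if some `ecc u ≥ 3`,
a vertex at distance `2` from `u` violates this, and conversely diameter `≤ 2` makes every
non-neighbour an eccentric vertex.
-/

open SimpleGraph

lemma two_dvd_sum_sum_of_symm {α : Type*} (s : Finset α) {f : α → α → ℕ}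
    (hsymm : ∀ a b, f a b = f b a) (hdiag : ∀ a, f a a = 0) :
    2 ∣ ∑ a ∈ s, ∑ b ∈ s, f a b := by
  rw [← ZMod.natCast_eq_zero_iff]
  push_cast
  rw [← sum_product']
  refine sum_involution (fun p _ => p.swap) (fun p _ => ?_) (fun p _ hp hswap => hp ?_)
    (fun p hp => mem_product.mpr (mem_product.mp hp).symm) fun p _ => p.swap_swap
  · rw [Prod.fst_swap, Prod.snd_swap, hsymm, CharTwo.add_self_eq_zero]
  · rw [show p.2 = p.1 from congrArg Prod.fst hswap, hdiag, Nat.cast_zero]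

namespace SimpleGraph

variable {V : Type*} {G : SimpleGraph V}

lemma Reachable.exists_dist_eq_of_le {u v : V} (hr : G.Reachable u v) {k : ℕ}
    (hk : k ≤ G.dist u v) : ∃ w, G.dist u w = k := by
  obtain ⟨p, hp⟩ := hr.exists_walk_length_eq_dist
  refine ⟨p.getVert k, le_antisymm ?_ ?_⟩
  · exact (dist_le (p.take k)).trans (p.take_length k ▸ min_le_left _ _)
  · have hdrop : G.dist (p.getVert k) v ≤ G.dist u v - k := by
      simpa [hp] using dist_le (p.drop k)
    have := Reachable.dist_triangle_right ⟨p.drop k⟩ u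
    omega

lemma dist_eq_ite_adj_add_ite_compl_adj [DecidableEq V] [DecidableRel G.Adj] (u v : V) :
    G.dist u v = (if G.Adj u v then 1 else 0) + if Gᶜ.Adj u v then G.dist u v else 0 := by
  by_cases hadj : G.Adj u v
  · simp [hadj, dist_eq_one_iff_adj.mpr hadj]
  · by_cases huv : u = v <;> simp [hadj, huv]

variable [Fintype V]

lemma two_mul_wiener : 2 * wiener G = ∑ u, ∑ v, G.dist u v :=
  Nat.mul_div_cancel' <| two_dvd_sum_sum_of_symm _ (fun _ _ => dist_comm) fun _ => dist_self

lemma dist_le_eccVert (u v : V) : G.dist u v ≤ eccVert G u :=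
  le_sup (mem_univ v)

lemma exists_dist_eq_eccVert [Nonempty V] (u : V) : ∃ v, G.dist u v = eccVert G u := by
  obtain ⟨v, -, hv⟩ := exists_mem_eq_sup univ univ_nonempty (G.dist u)
  exact ⟨v, hv.symm⟩

lemma graphDiam_le_two_iff (hG : G.Connected) :
    graphDiam G ≤ 2 ↔ ∀ u v, Gᶜ.Adj u v → G.dist u v = eccVert G u := by
  rw [graphDiam, Finset.sup_le_iff]
  constructor
  · intro hdiam u v huv
    rw [compl_adj] at huv
    have hgt := hG.one_lt_dist_of_ne_of_not_adj huv.1 huv.2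
    have hle := dist_le_eccVert (G := G) u v
    have hecc := hdiam u (mem_univ u)
    omega
  · intro hecc u _
    have := hG.nonempty
    by_contra! hu
    obtain ⟨v, hv⟩ := exists_dist_eq_eccVert (G := G) u
    obtain ⟨w, hw⟩ := (hG u v).exists_dist_eq_of_le (k := 2) (by omega)
    have huw : Gᶜ.Adj u w := by
      rw [compl_adj]
      refine ⟨fun h => ?_, fun h => ?_⟩
      · simp [h] at hw
      · simp [dist_eq_one_iff_adj.mpr h] at hw
    have hw_ecc := hecc u w huw
    omega

variable [DecidableEq V] [DecidableRel G.Adj]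

lemma sum_dist_eq_degree_add_sum_compl (u : V) :
    ∑ v, G.dist u v = G.degree u + ∑ v ∈ Gᶜ.neighborFinset u, G.dist u v := by
  simp only [neighborFinset_eq_filter, sum_filter, ← card_neighborFinset_eq_degree,
    card_filter]
  rw [← sum_add_distrib]
  exact sum_congr rfl fun v _ => dist_eq_ite_adj_add_ite_compl_adj u v

lemma sum_dist_le (u : V) :
    ∑ v, G.dist u v ≤ G.degree u + Gᶜ.degree u * eccVert G u := by
  rw [sum_dist_eq_degree_add_sum_compl, ← card_neighborFinset_eq_degree Gᶜ, ← smul_eq_mul,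
    ← sum_const]
  exact Nat.add_le_add_left (sum_le_sum fun v _ => dist_le_eccVert u v) _

lemma sum_dist_eq_iff (u : V) :
    ∑ v, G.dist u v = G.degree u + Gᶜ.degree u * eccVert G u ↔
      ∀ v, Gᶜ.Adj u v → G.dist u v = eccVert G u := by
  rw [sum_dist_eq_degree_add_sum_compl, ← card_neighborFinset_eq_degree Gᶜ, ← smul_eq_mul,
    ← sum_const, Nat.add_left_cancel_iff,
    sum_eq_sum_iff_of_le fun v _ => dist_le_eccVert u v]
  simp only [mem_neighborFinset]

lemma sum_degree_add_compl_degree_mul_eccVert :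
    ((∑ u, (G.degree u + Gᶜ.degree u * eccVert G u) : ℕ) : ℤ) =
      (Fintype.card V - 1) * eccSum G - eccConn G + 2 * G.edgeFinset.card := by
  have hcompl (u : V) : (Gᶜ.degree u : ℤ) = Fintype.card V - 1 - G.degree u := by
    have := G.degree_lt_card_verts u
    rw [degree_compl]
    omega
  have hdeg : (∑ u, G.degree u : ℤ) = 2 * G.edgeFinset.card := by
    exact_mod_cast G.sum_degrees_eq_twice_card_edges
  simp only [eccSum, eccConn, Nat.cast_sum, Nat.cast_add, Nat.cast_mul, hcompl, mul_sum,
    ← hdeg, ← sum_sub_distrib, ← sum_add_distrib]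
  exact sum_congr rfl fun u _ => by ring

end SimpleGraph

theorem stmt_5 {V : Type*} [Fintype V] [DecidableEq V] (G : SimpleGraph V)
    [DecidableRel G.Adj] (hG : G.Connected) :
    (2 * wiener G : ℤ) ≤
        (Fintype.card V - 1) * eccSum G - eccConn G + 2 * G.edgeFinset.card ∧
      ((2 * wiener G : ℤ) =
          (Fintype.card V - 1) * eccSum G - eccConn G + 2 * G.edgeFinset.card ↔
        graphDiam G ≤ 2) := by
  have hle : ∀ u ∈ univ, ∑ v, G.dist u v ≤ G.degree u + Gᶜ.degree u * eccVert G u :=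
    fun u _ => sum_dist_le u
  rw [← sum_degree_add_compl_degree_mul_eccVert, ← Nat.cast_ofNat, ← Nat.cast_mul,
    two_mul_wiener, Nat.cast_le, Nat.cast_inj, sum_eq_sum_iff_of_le hle,
    graphDiam_le_two_iff hG]
  exact ⟨sum_le_sum hle, by simp only [mem_univ, sum_dist_eq_iff, forall_const]⟩
end
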